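/- Let A be a finite-dimensional C*-algebra over ℂ and let ψ be a faithful state on A such that, with respect to the inner product ⟨x, y⟩ = ψ(y* x) on A and the induced inner product on A ⊗ A, the multiplication map m : A ⊗ A → A satisfies m m* = (dim_ℂ A) · id_A. Then ψ(a) = (dim_ℂ A)^{-1} Tr(L_a) for all a ∈ A, where L_a is left multiplication by a; in particular such a state is unique. -/

import Mathlib

/-!
Write `⟪x, y⟫ = ψ (x⋆ y)`. For every `ψ`-orthonormal basis `(vᵢ)` the element `m (m⋆ 1)` equals
`∑ᵢ vᵢ vᵢ⋆`, so the hypothesis gives `∑ᵢ vᵢ vᵢ⋆ = n` for all such bases, where `n = dim A`.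
Diagonalising the hermitian form `(x, y) ↦ ψ (y x⋆)` in an orthonormal basis gives
`ψ (vᵢ vⱼ⋆) = μᵢ δᵢⱼ` with `μᵢ > 0`. Applying `ψ` to the identity for the orthonormal bases `(vᵢ)`
and `(μᵢ^{-1/2} vᵢ⋆)` yields `∑ μᵢ = n = ∑ μᵢ⁻¹`, which forces every `μᵢ = 1` since
`μ + μ⁻¹ ≥ 2`. Then `ψ (vᵢ vⱼ⋆) = ψ (vⱼ⋆ vᵢ)`, so `ψ` is tracial, and
`Tr L_a = ∑ᵢ ψ (vᵢ⋆ a vᵢ) = ψ (a ∑ᵢ vᵢ vᵢ⋆) = n ψ (a)`.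
-/

open scoped TensorProduct ComplexOrder

/-- The linear functional `⟪a ⊗ b, ·⟫` on `A ⊗[ℂ] A` for the inner product
`⟪x, y⟫ = ψ (star x * y)` induced by a positive functional `ψ`. -/
noncomputable def frobPair {A : Type*} [Ring A] [StarRing A] [Algebra ℂ A]
    (ψ : A →ₗ[ℂ] ℂ) (a b : A) : TensorProduct ℂ A A →ₗ[ℂ] ℂ :=
  TensorProduct.lift ((LinearMap.mul ℂ ℂ).compl₁₂
    (ψ ∘ₗ LinearMap.mulLeft ℂ (star a)) (ψ ∘ₗ LinearMap.mulLeft ℂ (star b)))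

open Module

section Sesquilinear

variable {E : Type*} [NormedAddCommGroup E] [InnerProductSpace ℂ E] [FiniteDimensional ℂ E]

theorem exists_orthonormalBasis_sesqForm_eq_ite (B : E →ₗ⋆[ℂ] E →ₗ[ℂ] ℂ)
    (hB : ∀ x y, starRingEnd ℂ (B x y) = B y x) {n : ℕ} (hn : finrank ℂ E = n) :
    ∃ (b : OrthonormalBasis (Fin n) ℂ E) (μ : Fin n → ℝ),
      ∀ i j, B (b i) (b j) = if i = j then (μ i : ℂ) else 0 := by
  let T : E →ₗ[ℂ] E := (InnerProductSpace.toDual ℂ E).symm.toLinearEquiv.toLinearMap ∘ₛₗ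
    (LinearMap.toContinuousLinearMap.toLinearMap ∘ₛₗ B)
  have hT : ∀ x y, inner ℂ (T x) y = B x y := fun x y => InnerProductSpace.toDual_symm_apply
  have hsymm : T.IsSymmetric := fun x y => by
    rw [hT, ← inner_conj_symm, hT, hB]
  refine ⟨hsymm.eigenvectorBasis hn, hsymm.eigenvalues hn, fun i j => ?_⟩
  rw [← hT, hsymm.apply_eigenvectorBasis, inner_smul_left,
    orthonormal_iff_ite.mp (hsymm.eigenvectorBasis hn).orthonormal]
  simp

end Sesquilinear

section Orthonormal

variable {A : Type*} [Ring A] [StarRing A] [Algebra ℂ A] (ψ : A →ₗ[ℂ] ℂ)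

@[simp]
theorem frobPair_tmul (a b x y : A) :
    frobPair ψ a b (x ⊗ₜ[ℂ] y) = ψ (star a * x) * ψ (star b * y) := by
  simp [frobPair]

variable {ι : Type*} [DecidableEq ι]

def OrthonormalFor (v : ι → A) : Prop :=
  ∀ i j, ψ (star (v i) * v j) = if i = j then 1 else 0

variable {ψ} {v : ι → A}

namespace OrthonormalFor

theorem ne_zero (hv : OrthonormalFor ψ v) (i : ι) : v i ≠ 0 := fun h => by
  simpa [h] using hv i i

variable [Fintype ι]

theorem linearIndependent (hv : OrthonormalFor ψ v) : LinearIndependent ℂ v := by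
  rw [Fintype.linearIndependent_iff]
  intro g hg j
  simpa [Finset.mul_sum, hv j] using congrArg (fun z => ψ (star (v j) * z)) hg

variable [FiniteDimensional ℂ A]

noncomputable def basis (hv : OrthonormalFor ψ v) (hcard : Fintype.card ι = finrank ℂ A) :
    Basis ι ℂ A :=
  basisOfLinearIndependentOfCardEqFinrank' v hv.linearIndependent hcard

@[simp]
theorem coe_basis (hv : OrthonormalFor ψ v) (hcard : Fintype.card ι = finrank ℂ A) :
    ⇑(hv.basis hcard) = v :=
  coe_basisOfLinearIndependentOfCardEqFinrank' _ _ _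

theorem basis_repr_apply (hv : OrthonormalFor ψ v) (hcard : Fintype.card ι = finrank ℂ A)
    (z : A) (i : ι) : (hv.basis hcard).repr z i = ψ (star (v i) * z) := by
  conv_rhs => rw [← (hv.basis hcard).sum_repr z]
  simp [Finset.mul_sum, hv i]

theorem sum_smul (hv : OrthonormalFor ψ v) (hcard : Fintype.card ι = finrank ℂ A) (z : A) :
    ∑ i, ψ (star (v i) * z) • v i = z := by
  simpa [hv.basis_repr_apply hcard] using (hv.basis hcard).sum_repr z

theorem trace_eq_sum (hv : OrthonormalFor ψ v) (hcard : Fintype.card ι = finrank ℂ A)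
    (f : A →ₗ[ℂ] A) : LinearMap.trace ℂ A f = ∑ i, ψ (star (v i) * f (v i)) := by
  simp [LinearMap.trace_eq_matrix_trace ℂ (hv.basis hcard), Matrix.trace,
    LinearMap.toMatrix_apply, hv.basis_repr_apply hcard]

theorem trace_mulLeft (hv : OrthonormalFor ψ v) (hcard : Fintype.card ι = finrank ℂ A)
    (htr : ∀ x y, ψ (x * y) = ψ (y * x)) (a : A) :
    LinearMap.trace ℂ A (LinearMap.mulLeft ℂ a) = ψ (a * ∑ i, v i * star (v i)) := by
  simp_rw [hv.trace_eq_sum hcard, LinearMap.mulLeft_apply, htr (star _), Finset.mul_sum, map_sum,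
    mul_assoc]

theorem sum_frobPair_smul_tmul (hv : OrthonormalFor ψ v) (hcard : Fintype.card ι = finrank ℂ A)
    (t : A ⊗[ℂ] A) : ∑ k, ∑ l, frobPair ψ (v k) (v l) t • (v k ⊗ₜ[ℂ] v l) = t := by
  induction t using TensorProduct.induction_on with
  | zero => simp
  | tmul x y =>
    conv_rhs => rw [← hv.sum_smul hcard x, ← hv.sum_smul hcard y]
    simp_rw [TensorProduct.sum_tmul, TensorProduct.tmul_sum, TensorProduct.smul_tmul_smul,
      frobPair_tmul]
  | add s t hs ht => simp [add_smul, Finset.sum_add_distrib, hs, ht]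

theorem mul'_eq_sum_mul_star (hv : OrthonormalFor ψ v) (hcard : Fintype.card ι = finrank ℂ A)
    {t : A ⊗[ℂ] A} (ht : ∀ a b, frobPair ψ a b t = ψ (star (a * b))) :
    LinearMap.mul' ℂ A t = ∑ i, v i * star (v i) := by
  rw [← hv.sum_frobPair_smul_tmul hcard t]
  simp only [map_sum, map_smul, LinearMap.mul'_apply, ht, star_mul]
  refine Finset.sum_congr rfl fun k _ => ?_
  simp_rw [← mul_smul_comm, ← Finset.mul_sum, hv.sum_smul hcard]

end OrthonormalFor

theorem apply_star_mul_self_pos (hpos : ∀ a : A, 0 ≤ ψ (star a * a))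
    (hfaith : ∀ a : A, ψ (star a * a) = 0 → a = 0) {x : A} (hx : x ≠ 0) :
    0 < ψ (star x * x) :=
  (hpos x).lt_of_ne fun h => hx (hfaith x h.symm)

end Orthonormal

section Positive

variable {A : Type*} [Ring A] [StarRing A] [Algebra ℂ A] [StarModule ℂ A] {ψ : A →ₗ[ℂ] ℂ}

theorem conj_apply_star_mul (hpos : ∀ a : A, 0 ≤ ψ (star a * a)) (x y : A) :
    starRingEnd ℂ (ψ (star x * y)) = ψ (star y * x) := by
  have hreal : ∀ z : A, starRingEnd ℂ (ψ (star z * z)) = ψ (star z * z) := fun z =>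
    Complex.conj_eq_iff_im.mpr (Complex.nonneg_iff.mp (hpos z)).2.symm
  have h₁ := hreal (x + y)
  have h₂ := hreal (x + Complex.I • y)
  simp only [star_add, star_smul, add_mul, mul_add, smul_mul_assoc, mul_smul_comm, map_add,
    map_smul, smul_eq_mul, map_mul, map_neg, hreal, Complex.star_def, Complex.conj_I,
    neg_neg] at h₁ h₂
  linear_combination (h₁ + Complex.I * h₂) / 2 + (starRingEnd ℂ (ψ (star x * y)) -
    starRingEnd ℂ (ψ (star y * x)) + ψ (star x * y) - ψ (star y * x)) / 2 * Complex.I_sq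

theorem conj_apply_mul_star (hpos : ∀ a : A, 0 ≤ ψ (star a * a)) (x y : A) :
    starRingEnd ℂ (ψ (x * star y)) = ψ (y * star x) := by
  simpa using conj_apply_star_mul hpos (star x) (star y)

end Positive

section GNS

variable {A : Type*} [Ring A] [StarRing A] [Algebra ℂ A]

set_option linter.unusedVariables false in
/-- A copy of `A`, to carry the inner product `⟪x, y⟫ = ψ (star x * y)` without clashing with
the norm of `A`. -/
def GNSSpace (ψ : A →ₗ[ℂ] ℂ) : Type _ := A

variable (ψ : A →ₗ[ℂ] ℂ)

instance : AddCommGroup (GNSSpace ψ) := inferInstanceAs (AddCommGroup A)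
instance : Module ℂ (GNSSpace ψ) := inferInstanceAs (Module ℂ A)

def toGNSSpace : A ≃ₗ[ℂ] GNSSpace ψ := LinearEquiv.refl ℂ A

variable {ψ} [StarModule ℂ A]

noncomputable abbrev GNSSpace.innerCore (hpos : ∀ a : A, 0 ≤ ψ (star a * a))
    (hfaith : ∀ a : A, ψ (star a * a) = 0 → a = 0) : InnerProductSpace.Core ℂ (GNSSpace ψ) where
  inner x y := ψ (star ((toGNSSpace ψ).symm x) * (toGNSSpace ψ).symm y)
  conj_inner_symm x y := conj_apply_star_mul hpos _ _
  re_inner_nonneg x := (Complex.nonneg_iff.mp (hpos _)).1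
  add_left x y z := by simp [add_mul]
  smul_left x y r := by simp
  definite x hx := hfaith _ hx

theorem exists_orthonormalFor_mul_star_eq_ite [FiniteDimensional ℂ A]
    (hpos : ∀ a : A, 0 ≤ ψ (star a * a)) (hfaith : ∀ a : A, ψ (star a * a) = 0 → a = 0) :
    ∃ (v : Fin (finrank ℂ A) → A) (μ : Fin (finrank ℂ A) → ℝ), OrthonormalFor ψ v ∧
      ∀ i j, ψ (v i * star (v j)) = if i = j then (μ i : ℂ) else 0 := by
  let core := GNSSpace.innerCore hpos hfaith
  let := core.toNormedAddCommGroup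
  let := InnerProductSpace.ofCore core.toCore
  let e := (toGNSSpace ψ).symm
  have : FiniteDimensional ℂ (GNSSpace ψ) := e.symm.finiteDimensional
  let B : GNSSpace ψ →ₗ⋆[ℂ] GNSSpace ψ →ₗ[ℂ] ℂ := LinearMap.mk₂'ₛₗ _ _
    (fun y x => ψ (e x * star (e y))) (by simp [mul_add]) (by simp) (by simp [add_mul])
    (by simp)
  obtain ⟨b, μ, hb⟩ := exists_orthonormalBasis_sesqForm_eq_ite B
    (fun x y => conj_apply_mul_star hpos _ _) e.finrank_eq
  refine ⟨fun i => e (b i), μ, fun i j => orthonormal_iff_ite.mp b.orthonormal i j, fun i j => ?_⟩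
  rw [show ψ (e (b i) * star (e (b j))) = B (b j) (b i) from rfl, hb]
  split_ifs <;> simp_all [eq_comm]

end GNS

theorem eq_one_of_sum_eq_card_of_sum_inv_eq_card {ι : Type*} [Fintype ι] {μ : ι → ℝ}
    (hμ : ∀ i, 0 < μ i) (hsum : ∑ i, μ i = Fintype.card ι)
    (hsum_inv : ∑ i, (μ i)⁻¹ = Fintype.card ι) (i : ι) : μ i = 1 := by
  have hsq : ∀ i, μ i + (μ i)⁻¹ - 2 = (μ i - 1) ^ 2 / μ i := fun i => by
    field_simp [(hμ i).ne']
    ring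
  have hzero : ∑ i, (μ i - 1) ^ 2 / μ i = 0 := by
    simp_rw [← hsq, Finset.sum_sub_distrib, Finset.sum_add_distrib, hsum, hsum_inv]
    simp
    ring
  have hi := (Finset.sum_eq_zero_iff_of_nonneg fun i _ => by have := hμ i; positivity).mp
    hzero i (Finset.mem_univ i)
  rw [div_eq_zero_iff, or_iff_left (hμ i).ne', pow_eq_zero_iff two_ne_zero, sub_eq_zero] at hi
  exact hi

theorem Complex.inv_sqrt_mul_inv_sqrt {r : ℝ} (hr : 0 ≤ r) :
    (√r : ℂ)⁻¹ * (√r : ℂ)⁻¹ = (r : ℂ)⁻¹ := by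
  rw [← mul_inv, ← Complex.ofReal_mul, Real.mul_self_sqrt hr]

section Tracial

variable {A : Type*} [Ring A] [StarRing A] [Algebra ℂ A] [StarModule ℂ A] {ψ : A →ₗ[ℂ] ℂ}

theorem orthonormalFor_inv_sqrt_smul_star {ι : Type*} [DecidableEq ι] {v : ι → A} {μ : ι → ℝ}
    (hμ : ∀ i, 0 < μ i) (hdiag : ∀ i j, ψ (v i * star (v j)) = if i = j then (μ i : ℂ) else 0) :
    OrthonormalFor ψ fun i => ((√(μ i) : ℂ))⁻¹ • star (v i) := by
  intro i j
  simp only [star_smul, star_star, smul_mul_assoc, mul_smul_comm, map_smul, hdiag, smul_eq_mul]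
  split_ifs with h
  · subst h
    simp [← mul_assoc, Complex.inv_sqrt_mul_inv_sqrt (hμ i).le, (hμ i).ne']
  · simp

variable [FiniteDimensional ℂ A]

theorem apply_mul_comm_of_mul'_eq_finrank_smul_one (hpos : ∀ a : A, 0 ≤ ψ (star a * a))
    (hfaith : ∀ a : A, ψ (star a * a) = 0 → a = 0) (hstate : ψ 1 = 1) {t : A ⊗[ℂ] A}
    (ht : ∀ a b, frobPair ψ a b t = ψ (star (a * b)))
    (hmt : LinearMap.mul' ℂ A t = (finrank ℂ A : ℂ) • 1) (x y : A) :
    ψ (x * y) = ψ (y * x) := by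
  obtain ⟨v, μ, hv, hdiag⟩ := exists_orthonormalFor_mul_star_eq_ite hpos hfaith
  have hcard : Fintype.card (Fin (finrank ℂ A)) = finrank ℂ A := Fintype.card_fin _
  have hsum {w : Fin (finrank ℂ A) → A} (hw : OrthonormalFor ψ w) :
      ∑ i, ψ (w i * star (w i)) = finrank ℂ A := by
    rw [← map_sum, ← hw.mul'_eq_sum_mul_star hcard ht, hmt, map_smul, hstate, smul_eq_mul, mul_one]
  have hμ : ∀ i, 0 < μ i := fun i => by
    simpa [hdiag] using apply_star_mul_self_pos hpos hfaith (star_ne_zero.mpr (hv.ne_zero i))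
  have hμ_one : ∀ i, μ i = 1 := by
    refine eq_one_of_sum_eq_card_of_sum_inv_eq_card hμ ?_ ?_
    · have h := hsum hv
      simp only [hdiag, if_true] at h
      rw [hcard]
      exact_mod_cast h
    · have h := hsum (orthonormalFor_inv_sqrt_smul_star hμ hdiag)
      simp [hv _ _, Complex.inv_sqrt_mul_inv_sqrt (hμ _).le] at h
      rw [hcard]
      exact_mod_cast h
  have hstar : OrthonormalFor ψ (star v) := fun i j => by simpa [hμ_one] using hdiag i j
  refine LinearMap.congr_fun₂ (LinearMap.ext_basis (hv.basis hcard) (hstar.basis hcard)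
    (B := (LinearMap.mul ℂ A).compr₂ ψ) (B' := (LinearMap.mul ℂ A).flip.compr₂ ψ)
    fun i j => ?_) x y
  simp [hdiag, hμ_one, hv j i, eq_comm]

end Tracial

theorem statement7_general {A : Type*} [NormedRing A] [StarRing A]
    [NormedAlgebra ℂ A] [StarModule ℂ A] [FiniteDimensional ℂ A]
    (ψ : A →ₗ[ℂ] ℂ)
    (hpos : ∀ a : A, 0 ≤ ψ (star a * a))
    (hfaith : ∀ a : A, ψ (star a * a) = 0 → a = 0)
    (hstate : ψ 1 = 1)
    (mstar : A → TensorProduct ℂ A A)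
    (hadj : ∀ a b y : A, frobPair ψ a b (mstar y) = ψ (star (a * b) * y))
    (hQ : ∀ y : A, LinearMap.mul' ℂ A (mstar y) = (Module.finrank ℂ A : ℂ) • y) :
    ∀ a : A, ψ a = (Module.finrank ℂ A : ℂ)⁻¹ *
      LinearMap.trace ℂ A (LinearMap.mulLeft ℂ a) := by
  intro a
  have ht : ∀ x y : A, frobPair ψ x y (mstar 1) = ψ (star (x * y)) := fun x y => by
    simpa using hadj x y 1
  have : Nontrivial A := ⟨1, 0, fun h => by simp [h] at hstate⟩
  have hn : (finrank ℂ A : ℂ) ≠ 0 := Nat.cast_ne_zero.mpr finrank_pos.ne'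
  obtain ⟨v, -, hv, -⟩ := exists_orthonormalFor_mul_star_eq_ite hpos hfaith
  have hcard := Fintype.card_fin (finrank ℂ A)
  rw [hv.trace_mulLeft hcard
      (apply_mul_comm_of_mul'_eq_finrank_smul_one hpos hfaith hstate ht (hQ 1)),
    ← hv.mul'_eq_sum_mul_star hcard ht, hQ, mul_smul_one, map_smul, smul_eq_mul,
    inv_mul_cancel_left₀ hn]

theorem statement7 {A : Type*} [NormedRing A] [StarRing A] [CStarRing A]
    [NormedAlgebra ℂ A] [StarModule ℂ A] [FiniteDimensional ℂ A]
    (ψ : A →ₗ[ℂ] ℂ)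
    (hpos : ∀ a : A, 0 ≤ ψ (star a * a))
    (hfaith : ∀ a : A, ψ (star a * a) = 0 → a = 0)
    (hstate : ψ 1 = 1)
    (mstar : A → TensorProduct ℂ A A)
    (hadj : ∀ a b y : A, frobPair ψ a b (mstar y) = ψ (star (a * b) * y))
    (hQ : ∀ y : A, LinearMap.mul' ℂ A (mstar y) = (Module.finrank ℂ A : ℂ) • y) :
    ∀ a : A, ψ a = (Module.finrank ℂ A : ℂ)⁻¹ *
      LinearMap.trace ℂ A (LinearMap.mulLeft ℂ a) :=
  statement7_general ψ hpos hfaith hstate mstar hadj hQ
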